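/- arXiv:1205.1947 — 5 statements merged into one kernel-verified Lean document; each statement's English description precedes it below -/
import Mathlib

section
/- Let S be a symmetric N²×N² real matrix that commutes with E⊗I and with I⊗E, and let h ∈ ℝ^{N²}. Define the vector field f(q) = J_0(q, S(q−h)). Then f is diagonal-free: for every index i, every q ∈ ℝ^{N²} and every t ∈ ℝ, the i-th component satisfies (f(q + t e_i))_i = (f(q))_i, i.e. the i-th component of f does not depend on the i-th variable. -/
/-! `D_x` and `D_y` are skew-symmetric and commute with the symmetric `S`, so `D_x`, `D_y`, `D_x S`
and `D_y S` are skew-symmetric and hence have zero diagonal. Each of the four factors in the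
`i`-th component of `J_0(q, S(q - h))` is the `i`-th entry of one of these matrices applied to `q`
or `q - h`, so it does not see the `i`-th coordinate. -/

open Matrix
open scoped Kronecker

noncomputable section

/-- The `N×N` cyclic shift matrix: `E i j = 1` iff `j ≡ i+1 (mod N)`. -/
def shiftE (N : ℕ) : Matrix (Fin N) (Fin N) ℝ :=
  Matrix.of fun i j => if ((i : ℕ) + 1) % N = (j : ℕ) then 1 else 0

/-- The grid spacing `δ = 2π/N`. -/
def gridDelta (N : ℕ) : ℝ := 2 * Real.pi / N

/-- The central divided-difference matrix `D = (E - Eᵀ)/(2δ)`. -/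
def Dmat (N : ℕ) : Matrix (Fin N) (Fin N) ℝ :=
  (2 * gridDelta N)⁻¹ • (shiftE N - (shiftE N)ᵀ)

/-- `D_x = I ⊗ D`. -/
def Dx (N : ℕ) : Matrix (Fin N × Fin N) (Fin N × Fin N) ℝ :=
  (1 : Matrix (Fin N) (Fin N) ℝ) ⊗ₖ Dmat N

/-- `D_y = D ⊗ I`. -/
def Dy (N : ℕ) : Matrix (Fin N × Fin N) (Fin N × Fin N) ℝ :=
  Dmat N ⊗ₖ (1 : Matrix (Fin N) (Fin N) ℝ)

/-- `J_0(q, ψ) = (D_x q)∗(D_y ψ) − (D_y q)∗(D_x ψ)` (componentwise products). -/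
def J0 (N : ℕ) (q ψ : Fin N × Fin N → ℝ) : Fin N × Fin N → ℝ :=
  (Dx N).mulVec q * (Dy N).mulVec ψ - (Dy N).mulVec q * (Dx N).mulVec ψ

/-- `J_E(q, ψ) = D_x(q ∗ D_y ψ) − D_y(q ∗ D_x ψ)`. -/
def JE (N : ℕ) (q ψ : Fin N × Fin N → ℝ) : Fin N × Fin N → ℝ :=
  (Dx N).mulVec (q * (Dy N).mulVec ψ) - (Dy N).mulVec (q * (Dx N).mulVec ψ)

/-- `J_Z(q, ψ) = D_y((D_x q) ∗ ψ) − D_x((D_y q) ∗ ψ)`. -/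
def JZ (N : ℕ) (q ψ : Fin N × Fin N → ℝ) : Fin N × Fin N → ℝ :=
  (Dy N).mulVec ((Dx N).mulVec q * ψ) - (Dx N).mulVec ((Dy N).mulVec q * ψ)

/-- The Arakawa energy–enstrophy bracket `J_EZ = (J_0 + J_E + J_Z)/3`. -/
def JEZ (N : ℕ) (q ψ : Fin N × Fin N → ℝ) : Fin N × Fin N → ℝ :=
  (3 : ℝ)⁻¹ • (J0 N q ψ + JE N q ψ + JZ N q ψ)

namespace Matrix

variable {l m n p R : Type*}

theorem kronecker_sub [NonUnitalNonAssocRing R] (A : Matrix l m R) (B₁ B₂ : Matrix n p R) :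
    A ⊗ₖ (B₁ - B₂) = A ⊗ₖ B₁ - A ⊗ₖ B₂ := by
  ext
  simp [mul_sub]

theorem sub_kronecker [NonUnitalNonAssocRing R] (A₁ A₂ : Matrix l m R) (B : Matrix n p R) :
    (A₁ - A₂) ⊗ₖ B = A₁ ⊗ₖ B - A₂ ⊗ₖ B := by
  ext
  simp [sub_mul]

theorem transpose_kronecker [CommMagma R] (A : Matrix l m R) (B : Matrix n p R) :
    (A ⊗ₖ B)ᵀ = Aᵀ ⊗ₖ Bᵀ :=
  (kroneckerMap_transpose _ A B).symm

theorem diag_eq_zero_of_transpose_eq_neg [AddGroup R] [IsAddTorsionFree R] {A : Matrix n n R}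
    (hA : Aᵀ = -A) (i : n) : A i i = 0 :=
  self_eq_neg.mp (congrFun (congrFun hA i) i)

theorem transpose_smul_sub_transpose [Ring R] (c : R) (B : Matrix n n R) :
    (c • (B - Bᵀ))ᵀ = -(c • (B - Bᵀ)) := by
  rw [transpose_smul, transpose_sub, transpose_transpose, ← smul_neg, neg_sub]

variable [Fintype n]

theorem IsSymm.commute_transpose [CommSemiring R] {S B : Matrix n n R} (hS : S.IsSymm)
    (h : Commute S B) : Commute S Bᵀ :=
  calc S * Bᵀ = (B * S)ᵀ := by rw [transpose_mul, hS.eq]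
    _ = (S * B)ᵀ := by rw [h.eq]
    _ = Bᵀ * S := by rw [transpose_mul, hS.eq]

theorem IsSymm.commute_smul_sub_transpose [CommRing R] {S B : Matrix n n R} (hS : S.IsSymm)
    (h : Commute S B) (c : R) : Commute S (c • (B - Bᵀ)) :=
  (h.sub_right (hS.commute_transpose h)).smul_right c

theorem IsSymm.transpose_mul_eq_neg [CommRing R] {A S : Matrix n n R} (hS : S.IsSymm)
    (hA : Aᵀ = -A) (h : Commute S A) : (A * S)ᵀ = -(A * S) := by
  rw [transpose_mul, hS.eq, hA, mul_neg, h.eq]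

theorem mulVec_add_smul_single_apply [CommSemiring R] [DecidableEq n] (M : Matrix m n R)
    (v : n → R) (t : R) (i : m) (j : n) :
    (M *ᵥ (v + t • Pi.single j 1)) i = (M *ᵥ v) i + t * M i j := by
  simp [mulVec_add, mulVec_smul]

end Matrix

theorem Dx_eq_smul_sub_transpose (N : ℕ) :
    Dx N = (2 * gridDelta N)⁻¹ • ((1 : Matrix (Fin N) (Fin N) ℝ) ⊗ₖ shiftE N
      - ((1 : Matrix (Fin N) (Fin N) ℝ) ⊗ₖ shiftE N)ᵀ) := by
  rw [Dx, Dmat, kronecker_smul, kronecker_sub, transpose_kronecker, transpose_one]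

theorem Dy_eq_smul_sub_transpose (N : ℕ) :
    Dy N = (2 * gridDelta N)⁻¹ • (shiftE N ⊗ₖ (1 : Matrix (Fin N) (Fin N) ℝ)
      - (shiftE N ⊗ₖ (1 : Matrix (Fin N) (Fin N) ℝ))ᵀ) := by
  rw [Dy, Dmat, smul_kronecker, sub_kronecker, transpose_kronecker, transpose_one]

theorem Dx_transpose (N : ℕ) : (Dx N)ᵀ = -Dx N := by
  rw [Dx_eq_smul_sub_transpose]
  exact transpose_smul_sub_transpose _ _

theorem Dy_transpose (N : ℕ) : (Dy N)ᵀ = -Dy N := by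
  rw [Dy_eq_smul_sub_transpose]
  exact transpose_smul_sub_transpose _ _

theorem J0_diagonal_free_general (N : ℕ)
    (S : Matrix (Fin N × Fin N) (Fin N × Fin N) ℝ)
    (hSsymm : Sᵀ = S)
    (hS1 : S * (shiftE N ⊗ₖ (1 : Matrix (Fin N) (Fin N) ℝ)) =
      (shiftE N ⊗ₖ (1 : Matrix (Fin N) (Fin N) ℝ)) * S)
    (hS2 : S * ((1 : Matrix (Fin N) (Fin N) ℝ) ⊗ₖ shiftE N) =
      ((1 : Matrix (Fin N) (Fin N) ℝ) ⊗ₖ shiftE N) * S)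
    (h : Fin N × Fin N → ℝ) :
    ∀ (i : Fin N × Fin N) (q : Fin N × Fin N → ℝ) (t : ℝ),
      J0 N (q + t • (Pi.single i 1 : Fin N × Fin N → ℝ))
        (S.mulVec (q + t • (Pi.single i 1 : Fin N × Fin N → ℝ) - h)) i
      = J0 N q (S.mulVec (q - h)) i := by
  intro i q t
  have hSx : Commute S (Dx N) := by
    rw [Dx_eq_smul_sub_transpose]
    exact IsSymm.commute_smul_sub_transpose hSsymm hS2 _
  have hSy : Commute S (Dy N) := by
    rw [Dy_eq_smul_sub_transpose]
    exact IsSymm.commute_smul_sub_transpose hSsymm hS1 _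
  have hx : Dx N i i = 0 := diag_eq_zero_of_transpose_eq_neg (Dx_transpose N) i
  have hy : Dy N i i = 0 := diag_eq_zero_of_transpose_eq_neg (Dy_transpose N) i
  have hxS : (Dx N * S) i i = 0 := diag_eq_zero_of_transpose_eq_neg
    (IsSymm.transpose_mul_eq_neg hSsymm (Dx_transpose N) hSx) i
  have hyS : (Dy N * S) i i = 0 := diag_eq_zero_of_transpose_eq_neg
    (IsSymm.transpose_mul_eq_neg hSsymm (Dy_transpose N) hSy) i
  rw [add_sub_right_comm]
  simp only [J0, Pi.sub_apply, Pi.mul_apply, mulVec_mulVec, mulVec_add_smul_single_apply,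
    hx, hy, hxS, hyS, mul_zero, add_zero]

/-- for a symmetric `S` commuting with `E⊗I` and `I⊗E`, the vector
field `f(q) = J_0(q, S(q−h))` is diagonal-free: its `i`-th component does not
depend on the `i`-th variable. -/
theorem J0_diagonal_free (N : ℕ) (hN : 3 ≤ N)
    (S : Matrix (Fin N × Fin N) (Fin N × Fin N) ℝ)
    (hSsymm : Sᵀ = S)
    (hS1 : S * (shiftE N ⊗ₖ (1 : Matrix (Fin N) (Fin N) ℝ)) =
      (shiftE N ⊗ₖ (1 : Matrix (Fin N) (Fin N) ℝ)) * S)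
    (hS2 : S * ((1 : Matrix (Fin N) (Fin N) ℝ) ⊗ₖ shiftE N) =
      ((1 : Matrix (Fin N) (Fin N) ℝ) ⊗ₖ shiftE N) * S)
    (h : Fin N × Fin N → ℝ) :
    ∀ (i : Fin N × Fin N) (q : Fin N × Fin N → ℝ) (t : ℝ),
      J0 N (q + t • (Pi.single i 1 : Fin N × Fin N → ℝ))
        (S.mulVec (q + t • (Pi.single i 1 : Fin N × Fin N → ℝ) - h)) i
      = J0 N q (S.mulVec (q - h)) i :=
  J0_diagonal_free_general N S hSsymm hS1 hS2 h
end
end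

section
/- Let S be a symmetric N²×N² real matrix that commutes with each of E⊗I, I⊗E, R⊗I and I⊗R, and let h ∈ ℝ^{N²}. Define the vector field f(q) = J_E(q, S(q−h)). Then f is diagonal-free: for every index i, every q ∈ ℝ^{N²} and every t ∈ ℝ, the i-th component satisfies (f(q + t e_i))_i = (f(q))_i, i.e. the i-th component of f does not depend on the i-th variable. -/
open Matrix
open scoped Kronecker

noncomputable section

/-- The `N×N` flip permutation matrix: `R j k = 1` iff `j + k ≡ 0 (mod N)`. -/
def flipR (N : ℕ) : Matrix (Fin N) (Fin N) ℝ :=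
  Matrix.of fun j k => if ((j : ℕ) + (k : ℕ)) % N = 0 then 1 else 0

/-!
Both difference operators are three-point stencils, so the component of `J_E(q, ψ)` at
`i = (a, b)` reads `q` only at the four neighbours of `i` (which differ from `i` since `N ≥ 2`),
`D_y ψ` only at `(a, b ± 1)` and `D_x ψ` only at `(a ± 1, b)`. Moving `q` along `e_i` changes
`ψ = S (q - h)` by `t • S e_i`. The symmetries of `S` form a group containing the shifts and flips
of each coordinate, hence the reflection `x ↦ 2a - x` of the first coordinate; it fixes `a` and
swaps `a ± 1`, so `D_y (S e_i)` vanishes wherever the first coordinate is `a`. Likewise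
`D_x (S e_i)` vanishes wherever the second coordinate is `b`.
-/

open Fin.CommRing

theorem PEquiv.toMatrix_toPEquiv_kronecker {α β γ δ R : Type*} [DecidableEq γ] [DecidableEq δ]
    [MulZeroOneClass R] (σ : α ≃ γ) (τ : β ≃ δ) :
    (σ.toPEquiv.toMatrix ⊗ₖ τ.toPEquiv.toMatrix : Matrix _ _ R) =
      (σ.prodCongr τ).toPEquiv.toMatrix := by
  ext ⟨a, b⟩ ⟨c, d⟩
  simp only [kroneckerMap_apply, PEquiv.toMatrix_apply, Equiv.toPEquiv_apply, Option.mem_def,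
    Option.some.injEq, Equiv.prodCongr_apply, Prod.map, Prod.ext_iff, ite_zero_mul_ite_zero, mul_one]

namespace Matrix

section Kronecker

variable {l m n R : Type*} [Fintype l] [Fintype n] [NonAssocSemiring R]

theorem one_kronecker_mulVec_apply [DecidableEq l] (A : Matrix m n R) (u : l × n → R) (a : l)
    (b : m) :
    ((1 : Matrix l l R) ⊗ₖ A *ᵥ u) (a, b) = (A *ᵥ fun j => u (a, j)) b := by
  simp [mulVec, dotProduct, Fintype.sum_prod_type, one_apply, ite_mul]

theorem kronecker_one_mulVec_apply [DecidableEq n] (A : Matrix m l R) (u : l × n → R) (a : m)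
    (b : n) :
    (A ⊗ₖ (1 : Matrix n n R) *ᵥ u) (a, b) = (A *ᵥ fun i => u (i, b)) a := by
  simp [mulVec, dotProduct, Fintype.sum_prod_type, one_apply, ite_mul]

end Kronecker

variable {ι R : Type*}

def symmetryGroup (S : Matrix ι ι R) : Subgroup (Equiv.Perm ι) where
  carrier := {σ | ∀ i j, S (σ i) (σ j) = S i j}
  mul_mem' hσ hτ i j := (hσ _ _).trans (hτ i j)
  one_mem' _ _ := rfl
  inv_mem' {σ} hσ i j := by simpa using (hσ (σ⁻¹ i) (σ⁻¹ j)).symm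

theorem mem_symmetryGroup_iff {S : Matrix ι ι R} {σ : Equiv.Perm ι} :
    σ ∈ S.symmetryGroup ↔ ∀ i j, S (σ i) (σ j) = S i j :=
  Iff.rfl

theorem mem_symmetryGroup_of_commute [Fintype ι] [DecidableEq ι] [NonAssocSemiring R]
    {S : Matrix ι ι R} {σ : Equiv.Perm ι}
    (h : S * σ.toPEquiv.toMatrix = σ.toPEquiv.toMatrix * S) : σ ∈ S.symmetryGroup := by
  rw [PEquiv.mul_toMatrix_toPEquiv, PEquiv.toMatrix_toPEquiv_mul] at h
  refine mem_symmetryGroup_iff.mpr fun i j => ?_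
  simpa using (congrFun₂ h i (σ j)).symm

theorem prodCongr_refl_mem_symmetryGroup_of_commute [Fintype ι] [DecidableEq ι] {κ : Type*}
    [Fintype κ] [DecidableEq κ] [NonAssocSemiring R] {S : Matrix (ι × κ) (ι × κ) R}
    {σ : Equiv.Perm ι}
    (h : S * (σ.toPEquiv.toMatrix ⊗ₖ 1) = (σ.toPEquiv.toMatrix ⊗ₖ 1) * S) :
    σ.prodCongr (Equiv.refl κ) ∈ S.symmetryGroup := by
  rw [← PEquiv.toMatrix_refl, ← Equiv.toPEquiv_refl, PEquiv.toMatrix_toPEquiv_kronecker] at h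
  exact mem_symmetryGroup_of_commute h

theorem refl_prodCongr_mem_symmetryGroup_of_commute [Fintype ι] [DecidableEq ι] {κ : Type*}
    [Fintype κ] [DecidableEq κ] [NonAssocSemiring R] {S : Matrix (κ × ι) (κ × ι) R}
    {σ : Equiv.Perm ι}
    (h : S * (1 ⊗ₖ σ.toPEquiv.toMatrix) = (1 ⊗ₖ σ.toPEquiv.toMatrix) * S) :
    (Equiv.refl κ).prodCongr σ ∈ S.symmetryGroup := by
  rw [← PEquiv.toMatrix_refl, ← Equiv.toPEquiv_refl, PEquiv.toMatrix_toPEquiv_kronecker] at h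
  exact mem_symmetryGroup_of_commute h

end Matrix

section Reflection

variable {G β R : Type*} [AddCommGroup G]

theorem apply_add_fst_eq_apply_sub_fst {S : Matrix (G × β) (G × β) R}
    (hshift : ∀ c : G, (Equiv.addRight c).prodCongr (Equiv.refl β) ∈ S.symmetryGroup)
    (hneg : (Equiv.neg G).prodCongr (Equiv.refl β) ∈ S.symmetryGroup) (a d : G) (v w : β) :
    S (a + d, v) (a, w) = S (a - d, v) (a, w) := by
  have hρ := Matrix.mem_symmetryGroup_iff.mp (mul_mem (hshift (a + a)) hneg) (a + d, v) (a, w)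
  simp only [Equiv.Perm.coe_mul, Function.comp_apply, Equiv.prodCongr_apply, Prod.map,
    Equiv.coe_addRight, Equiv.neg_apply, Equiv.refl_apply] at hρ
  have hreflect : -(a + d) + (a + a) = a - d := by abel
  have hfix : -a + (a + a) = a := by abel
  rw [← hρ, hreflect, hfix]

theorem apply_add_snd_eq_apply_sub_snd {S : Matrix (β × G) (β × G) R}
    (hshift : ∀ c : G, (Equiv.refl β).prodCongr (Equiv.addRight c) ∈ S.symmetryGroup)
    (hneg : (Equiv.refl β).prodCongr (Equiv.neg G) ∈ S.symmetryGroup) (a d : G) (v w : β) :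
    S (v, a + d) (w, a) = S (v, a - d) (w, a) := by
  have hρ := Matrix.mem_symmetryGroup_iff.mp (mul_mem (hshift (a + a)) hneg) (v, a + d) (w, a)
  simp only [Equiv.Perm.coe_mul, Function.comp_apply, Equiv.prodCongr_apply, Prod.map,
    Equiv.coe_addRight, Equiv.neg_apply, Equiv.refl_apply] at hρ
  have hreflect : -(a + d) + (a + a) = a - d := by abel
  have hfix : -a + (a + a) = a := by abel
  rw [← hρ, hreflect, hfix]

end Reflection

section Grid

variable {N : ℕ} [NeZero N]

theorem shiftE_eq_toMatrix : shiftE N = (Equiv.addRight 1).toPEquiv.toMatrix := by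
  ext i j
  simp [shiftE, Fin.ext_iff, Fin.val_add, eq_comm]

theorem flipR_eq_toMatrix : flipR N = (Equiv.neg (Fin N)).toPEquiv.toMatrix := by
  ext i j
  simp only [flipR, of_apply, PEquiv.toMatrix_apply, Equiv.toPEquiv_apply, Option.mem_def,
    Option.some.injEq, Equiv.neg_apply, ← Fin.val_add, Fin.val_eq_zero_iff, neg_eq_iff_add_eq_zero]

theorem Dmat_mulVec_apply (v : Fin N → ℝ) (j : Fin N) :
    (Dmat N *ᵥ v) j = (2 * gridDelta N)⁻¹ * (v (j + 1) - v (j - 1)) := by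
  rw [Dmat, shiftE_eq_toMatrix, ← PEquiv.toMatrix_symm, ← Equiv.toPEquiv_symm, smul_mulVec,
    sub_mulVec, PEquiv.toMatrix_toPEquiv_mulVec, PEquiv.toMatrix_toPEquiv_mulVec]
  simp [sub_eq_add_neg]

theorem Dx_mulVec_apply (u : Fin N × Fin N → ℝ) (a b : Fin N) :
    (Dx N *ᵥ u) (a, b) = (2 * gridDelta N)⁻¹ * (u (a, b + 1) - u (a, b - 1)) := by
  rw [Dx, one_kronecker_mulVec_apply, Dmat_mulVec_apply]

theorem Dy_mulVec_apply (u : Fin N × Fin N → ℝ) (a b : Fin N) :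
    (Dy N *ᵥ u) (a, b) = (2 * gridDelta N)⁻¹ * (u (a + 1, b) - u (a - 1, b)) := by
  rw [Dy, kronecker_one_mulVec_apply, Dmat_mulVec_apply]

theorem JE_apply (q ψ : Fin N × Fin N → ℝ) (a b : Fin N) :
    JE N q ψ (a, b) =
      (2 * gridDelta N)⁻¹ * (q (a, b + 1) * (Dy N *ᵥ ψ) (a, b + 1)
        - q (a, b - 1) * (Dy N *ᵥ ψ) (a, b - 1))
      - (2 * gridDelta N)⁻¹ * (q (a + 1, b) * (Dx N *ᵥ ψ) (a + 1, b)
        - q (a - 1, b) * (Dx N *ᵥ ψ) (a - 1, b)) := by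
  rw [JE, Pi.sub_apply, Dx_mulVec_apply, Dy_mulVec_apply]
  rfl

theorem prodCongr_addRight_refl_mem {β : Type*} {H : Subgroup (Equiv.Perm (Fin N × β))}
    (h : (Equiv.addRight 1).prodCongr (Equiv.refl β) ∈ H) (c : Fin N) :
    (Equiv.addRight c).prodCongr (Equiv.refl β) ∈ H := by
  have hpow : ∀ n : ℕ, (Equiv.addRight (n : Fin N)).prodCongr (Equiv.refl β) =
      ((Equiv.addRight 1).prodCongr (Equiv.refl β)) ^ n := by
    intro n
    induction n with
    | zero => ext <;> simp
    | succ n ih => rw [pow_succ', ← ih]; ext <;> simp [add_assoc]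
  simpa [← hpow] using pow_mem h c.val

theorem prodCongr_refl_addRight_mem {β : Type*} {H : Subgroup (Equiv.Perm (β × Fin N))}
    (h : (Equiv.refl β).prodCongr (Equiv.addRight 1) ∈ H) (c : Fin N) :
    (Equiv.refl β).prodCongr (Equiv.addRight c) ∈ H := by
  have hpow : ∀ n : ℕ, (Equiv.refl β).prodCongr (Equiv.addRight (n : Fin N)) =
      ((Equiv.refl β).prodCongr (Equiv.addRight 1)) ^ n := by
    intro n
    induction n with
    | zero => ext <;> simp
    | succ n ih => rw [pow_succ', ← ih]; ext <;> simp [add_assoc]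
  simpa [← hpow] using pow_mem h c.val

variable {S : Matrix (Fin N × Fin N) (Fin N × Fin N) ℝ}

theorem Dy_mulVec_col_apply_fst_eq_zero
    (hshift : ∀ c : Fin N, (Equiv.addRight c).prodCongr (Equiv.refl _) ∈ S.symmetryGroup)
    (hneg : (Equiv.neg _).prodCongr (Equiv.refl _) ∈ S.symmetryGroup) (a b w : Fin N) :
    (Dy N *ᵥ S.col (a, b)) (a, w) = 0 := by
  rw [Dy_mulVec_apply, col_apply, col_apply, apply_add_fst_eq_apply_sub_fst hshift hneg, sub_self,
    mul_zero]

theorem Dx_mulVec_col_apply_snd_eq_zero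
    (hshift : ∀ c : Fin N, (Equiv.refl _).prodCongr (Equiv.addRight c) ∈ S.symmetryGroup)
    (hneg : (Equiv.refl _).prodCongr (Equiv.neg _) ∈ S.symmetryGroup) (a b v : Fin N) :
    (Dx N *ᵥ S.col (a, b)) (v, b) = 0 := by
  rw [Dx_mulVec_apply, col_apply, col_apply, apply_add_snd_eq_apply_sub_snd hshift hneg, sub_self,
    mul_zero]

end Grid

theorem JE_diagonal_free_general (N : ℕ) (hN : 3 ≤ N)
    (S : Matrix (Fin N × Fin N) (Fin N × Fin N) ℝ)
    (hS1 : S * (shiftE N ⊗ₖ (1 : Matrix (Fin N) (Fin N) ℝ)) =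
      (shiftE N ⊗ₖ (1 : Matrix (Fin N) (Fin N) ℝ)) * S)
    (hS2 : S * ((1 : Matrix (Fin N) (Fin N) ℝ) ⊗ₖ shiftE N) =
      ((1 : Matrix (Fin N) (Fin N) ℝ) ⊗ₖ shiftE N) * S)
    (hS3 : S * (flipR N ⊗ₖ (1 : Matrix (Fin N) (Fin N) ℝ)) =
      (flipR N ⊗ₖ (1 : Matrix (Fin N) (Fin N) ℝ)) * S)
    (hS4 : S * ((1 : Matrix (Fin N) (Fin N) ℝ) ⊗ₖ flipR N) =
      ((1 : Matrix (Fin N) (Fin N) ℝ) ⊗ₖ flipR N) * S)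
    (h : Fin N × Fin N → ℝ) :
    ∀ (i : Fin N × Fin N) (q : Fin N × Fin N → ℝ) (t : ℝ),
      JE N (q + t • (Pi.single i 1 : Fin N × Fin N → ℝ))
        (S.mulVec (q + t • (Pi.single i 1 : Fin N × Fin N → ℝ) - h)) i
      = JE N q (S.mulVec (q - h)) i := by
  have : NeZero N := ⟨by omega⟩
  have : Nontrivial (Fin N) := Fin.nontrivial_iff_two_le.mpr (by omega)
  rw [shiftE_eq_toMatrix] at hS1 hS2
  rw [flipR_eq_toMatrix] at hS3 hS4
  have hDy := Dy_mulVec_col_apply_fst_eq_zero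
    (prodCongr_addRight_refl_mem (prodCongr_refl_mem_symmetryGroup_of_commute hS1))
    (prodCongr_refl_mem_symmetryGroup_of_commute hS3)
  have hDx := Dx_mulVec_col_apply_snd_eq_zero
    (prodCongr_refl_addRight_mem (refl_prodCongr_mem_symmetryGroup_of_commute hS2))
    (refl_prodCongr_mem_symmetryGroup_of_commute hS4)
  rintro ⟨a, b⟩ q t
  have hψ : S *ᵥ (q + t • Pi.single (a, b) 1 - h) = S *ᵥ (q - h) + t • S.col (a, b) := by
    rw [add_sub_right_comm, mulVec_add, mulVec_smul, mulVec_single_one]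
  rw [hψ, JE_apply, JE_apply]
  simp [mulVec_add, mulVec_smul, hDx, hDy]

/-- for a symmetric `S` commuting with `E⊗I`, `I⊗E`, `R⊗I` and
`I⊗R`, the vector field `f(q) = J_E(q, S(q−h))` is diagonal-free: its `i`-th
component does not depend on the `i`-th variable. -/
theorem JE_diagonal_free (N : ℕ) (hN : 3 ≤ N)
    (S : Matrix (Fin N × Fin N) (Fin N × Fin N) ℝ)
    (hSsymm : Sᵀ = S)
    (hS1 : S * (shiftE N ⊗ₖ (1 : Matrix (Fin N) (Fin N) ℝ)) =
      (shiftE N ⊗ₖ (1 : Matrix (Fin N) (Fin N) ℝ)) * S)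
    (hS2 : S * ((1 : Matrix (Fin N) (Fin N) ℝ) ⊗ₖ shiftE N) =
      ((1 : Matrix (Fin N) (Fin N) ℝ) ⊗ₖ shiftE N) * S)
    (hS3 : S * (flipR N ⊗ₖ (1 : Matrix (Fin N) (Fin N) ℝ)) =
      (flipR N ⊗ₖ (1 : Matrix (Fin N) (Fin N) ℝ)) * S)
    (hS4 : S * ((1 : Matrix (Fin N) (Fin N) ℝ) ⊗ₖ flipR N) =
      ((1 : Matrix (Fin N) (Fin N) ℝ) ⊗ₖ flipR N) * S)
    (h : Fin N × Fin N → ℝ) :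
    ∀ (i : Fin N × Fin N) (q : Fin N × Fin N → ℝ) (t : ℝ),
      JE N (q + t • (Pi.single i 1 : Fin N × Fin N → ℝ))
        (S.mulVec (q + t • (Pi.single i 1 : Fin N × Fin N → ℝ) - h)) i
      = JE N q (S.mulVec (q - h)) i :=
  JE_diagonal_free_general N hN S hS1 hS2 hS3 hS4 h
end
end

section
/- Let a, b be integers and let T = E^a ⊗ E^b be the corresponding grid-translation permutation matrix on ℝ^{N²}. Let S be an N²×N² real matrix commuting with T. Then the Arakawa energy–enstrophy vector field is translation-equivariant: for all q, h ∈ ℝ^{N²}, J_EZ(Tq, S(Tq − Th)) = T · J_EZ(q, S(q − h)). -/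
open Matrix
open scoped Kronecker

noncomputable section

/-- The grid-translation permutation matrix `T = E^a ⊗ E^b` for integers `a, b`:
`T p q = 1` iff `q₁ ≡ p₁ + a` and `q₂ ≡ p₂ + b (mod N)`. -/
def transT (N : ℕ) (a b : ℤ) : Matrix (Fin N × Fin N) (Fin N × Fin N) ℝ :=
  Matrix.of fun p q =>
    if ((p.1 : ℤ) + a) % (N : ℤ) = (q.1 : ℤ) ∧ ((p.2 : ℤ) + b) % (N : ℤ) = (q.2 : ℤ)
    then 1 else 0


namespace JEZAux

variable {N : ℕ}

/-- Shift map on `Fin N` by an integer `c`. -/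
def sh (N : ℕ) [NeZero N] (c : ℤ) (i : Fin N) : Fin N :=
  ⟨(((i : ℤ) + c) % (N : ℤ)).toNat, by
    have hN : 0 < (N : ℤ) := by exact_mod_cast Nat.pos_of_ne_zero (NeZero.ne N)
    have h1 : 0 ≤ ((i : ℤ) + c) % (N : ℤ) := Int.emod_nonneg _ (by omega)
    have h2 : ((i : ℤ) + c) % (N : ℤ) < N := Int.emod_lt_of_pos _ hN
    omega⟩

lemma sh_coe [NeZero N] (c : ℤ) (i : Fin N) :
    ((sh N c i : Fin N) : ℤ) = ((i : ℤ) + c) % (N : ℤ) := by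
  have hN : 0 < (N : ℤ) := by exact_mod_cast Nat.pos_of_ne_zero (NeZero.ne N)
  simp only [sh]
  exact Int.toNat_of_nonneg (Int.emod_nonneg _ (by omega))

lemma sh_sh [NeZero N] (c d : ℤ) (i : Fin N) : sh N c (sh N d i) = sh N (d + c) i := by
  apply Fin.ext
  have h1 := sh_coe c (sh N d i)
  have h2 := sh_coe d i
  have h3 := sh_coe (d + c) i
  have : ((sh N c (sh N d i) : Fin N) : ℤ) = ((sh N (d + c) i : Fin N) : ℤ) := by
    rw [h1, h2, h3]
    conv_lhs => rw [Int.add_emod, Int.emod_emod_of_dvd _ dvd_rfl, ← Int.add_emod, add_assoc]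
  exact_mod_cast this

lemma sh_zero [NeZero N] (i : Fin N) : sh N 0 i = i := by
  apply Fin.ext
  have h := sh_coe (N := N) 0 i
  have : ((i : ℤ) + 0) % (N : ℤ) = (i : ℤ) := by
    rw [add_zero]; exact Int.emod_eq_of_lt (by positivity) (by exact_mod_cast i.isLt)
  rw [this] at h
  exact_mod_cast h

lemma sh_bijective [NeZero N] (c : ℤ) : Function.Bijective (sh N c) := by
  refine Function.bijective_iff_has_inverse.2 ⟨sh N (-c), fun i => ?_, fun i => ?_⟩
  · rw [sh_sh]; simp [sh_zero]
  · rw [sh_sh]; simp [sh_zero]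

/-- `shiftE` entries in integer form. -/
lemma shiftE_eq_int [NeZero N] (i j : Fin N) :
    shiftE N i j = if ((i : ℤ) + 1) % (N : ℤ) = (j : ℤ) % (N : ℤ) then 1 else 0 := by
  have hjN : ((j : ℤ)) % (N : ℤ) = (j : ℤ) :=
    Int.emod_eq_of_lt (by positivity) (by exact_mod_cast j.isLt)
  have : (((i : ℕ) + 1) % N = (j : ℕ)) ↔ (((i : ℤ) + 1) % (N : ℤ) = (j : ℤ) % (N : ℤ)) := by
    rw [hjN]
    constructor
    · intro hh
      have h2 : ((((i : ℕ) + 1) % N : ℕ) : ℤ) = ((j : ℕ) : ℤ) := by exact_mod_cast hh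
      push_cast at h2
      exact h2
    · intro hh
      have h2 : ((((i : ℕ) + 1) % N : ℕ) : ℤ) = ((j : ℕ) : ℤ) := by push_cast; exact hh
      exact_mod_cast h2
  simp only [shiftE, Matrix.of_apply]
  rw [if_congr this rfl rfl]

lemma shiftE_sh [NeZero N] (c : ℤ) (i j : Fin N) :
    shiftE N (sh N c i) (sh N c j) = shiftE N i j := by
  rw [shiftE_eq_int, shiftE_eq_int, sh_coe, sh_coe]
  apply if_congr _ rfl rfl
  have h1 : (((i : ℤ) + c) % (N : ℤ) + 1) % (N : ℤ) = ((i : ℤ) + c + 1) % (N : ℤ) := by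
    conv_lhs => rw [Int.add_emod, Int.emod_emod_of_dvd _ dvd_rfl, ← Int.add_emod]
  have h2 : (((j : ℤ) + c) % (N : ℤ)) % (N : ℤ) = ((j : ℤ) + c) % (N : ℤ) :=
    Int.emod_emod_of_dvd _ dvd_rfl
  rw [h1, h2, show (i : ℤ) + c + 1 = ((i : ℤ) + 1) + c by ring]
  constructor
  · intro hh
    have h3 : ((i : ℤ) + 1) + c ≡ (j : ℤ) + c [ZMOD (N : ℤ)] := hh
    exact Int.ModEq.add_right_cancel' c h3
  · intro hh
    have h3 : ((i : ℤ) + 1) ≡ (j : ℤ) [ZMOD (N : ℤ)] := hh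
    exact h3.add_right c

lemma Dmat_sh [NeZero N] (c : ℤ) (i j : Fin N) :
    Dmat N (sh N c i) (sh N c j) = Dmat N i j := by
  simp only [Dmat, Matrix.smul_apply, Matrix.sub_apply, Matrix.transpose_apply]
  rw [shiftE_sh, shiftE_sh]

lemma Dx_mulVec (g : Fin N × Fin N → ℝ) (p : Fin N × Fin N) :
    (Dx N).mulVec g p = ∑ l, Dmat N p.2 l * g (p.1, l) := by
  simp only [Matrix.mulVec, dotProduct, Dx, Matrix.kroneckerMap_apply, Fintype.sum_prod_type,
    Matrix.one_apply]
  simp [ite_mul, mul_comm]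

lemma Dy_mulVec (g : Fin N × Fin N → ℝ) (p : Fin N × Fin N) :
    (Dy N).mulVec g p = ∑ k, Dmat N p.1 k * g (k, p.2) := by
  simp only [Matrix.mulVec, dotProduct, Dy, Matrix.kroneckerMap_apply, Fintype.sum_prod_type,
    Matrix.one_apply]
  simp [ite_mul, mul_comm]

variable (a b : ℤ)

/-- The translation acting on grid functions. -/
def tr (N : ℕ) [NeZero N] (a b : ℤ) (f : Fin N × Fin N → ℝ) : Fin N × Fin N → ℝ :=
  fun p => f (sh N a p.1, sh N b p.2)

lemma transT_mulVec [NeZero N] (f : Fin N × Fin N → ℝ) :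
    (transT N a b).mulVec f = tr N a b f := by
  funext p
  have key : ∀ r : Fin N × Fin N,
      ((((p.1 : ℤ) + a) % (N : ℤ) = (r.1 : ℤ)) ∧ (((p.2 : ℤ) + b) % (N : ℤ) = (r.2 : ℤ)))
      ↔ r = (sh N a p.1, sh N b p.2) := by
    intro r
    rw [Prod.ext_iff]
    constructor
    · rintro ⟨h1, h2⟩
      constructor
      · show r.1 = sh N a p.1
        have h3 := sh_coe a p.1
        rw [h1] at h3
        exact Fin.ext (by exact_mod_cast h3.symm)
      · show r.2 = sh N b p.2
        have h3 := sh_coe b p.2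
        rw [h2] at h3
        exact Fin.ext (by exact_mod_cast h3.symm)
    · rintro ⟨h1, h2⟩
      constructor
      · rw [h1]; exact (sh_coe a p.1).symm
      · rw [h2]; exact (sh_coe b p.2).symm
  simp only [Matrix.mulVec, dotProduct, transT, Matrix.of_apply]
  rw [Finset.sum_congr rfl (fun r _ => by rw [if_congr (key r) rfl rfl])]
  simp [tr]

lemma Dx_tr [NeZero N] (f : Fin N × Fin N → ℝ) :
    (Dx N).mulVec (tr N a b f) = tr N a b ((Dx N).mulVec f) := by
  funext p
  rw [Dx_mulVec]
  show _ = (Dx N).mulVec f (sh N a p.1, sh N b p.2)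
  rw [Dx_mulVec]
  refine Fintype.sum_bijective (sh N b) (sh_bijective b)
    (fun l => Dmat N p.2 l * tr N a b f (p.1, l))
    (fun l => Dmat N (sh N b p.2) l * f (sh N a p.1, l)) fun l => ?_
  simp only [tr]
  rw [Dmat_sh]

lemma Dy_tr [NeZero N] (f : Fin N × Fin N → ℝ) :
    (Dy N).mulVec (tr N a b f) = tr N a b ((Dy N).mulVec f) := by
  funext p
  rw [Dy_mulVec]
  show _ = (Dy N).mulVec f (sh N a p.1, sh N b p.2)
  rw [Dy_mulVec]
  refine Fintype.sum_bijective (sh N a) (sh_bijective a)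
    (fun k => Dmat N p.1 k * tr N a b f (k, p.2))
    (fun k => Dmat N (sh N a p.1) k * f (k, sh N b p.2)) fun k => ?_
  simp only [tr]
  rw [Dmat_sh]

lemma tr_mul [NeZero N] (f g : Fin N × Fin N → ℝ) :
    tr N a b (f * g) = tr N a b f * tr N a b g := rfl

lemma tr_sub [NeZero N] (f g : Fin N × Fin N → ℝ) :
    tr N a b (f - g) = tr N a b f - tr N a b g := rfl

lemma tr_add [NeZero N] (f g : Fin N × Fin N → ℝ) :
    tr N a b (f + g) = tr N a b f + tr N a b g := rfl

lemma tr_smul [NeZero N] (c : ℝ) (f : Fin N × Fin N → ℝ) :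
    tr N a b (c • f) = c • tr N a b f := rfl

lemma JEZ_tr [NeZero N] (q ψ : Fin N × Fin N → ℝ) :
    JEZ N (tr N a b q) (tr N a b ψ) = tr N a b (JEZ N q ψ) := by
  simp only [JEZ, J0, JE, JZ]
  simp only [Dx_tr, Dy_tr, ← tr_mul, ← tr_sub, ← tr_add, ← tr_smul]

end JEZAux

/-- the Arakawa energy–enstrophy vector field is equivariant under
grid translations `T = E^a ⊗ E^b`, for any `S` commuting with `T`:
`J_EZ(Tq, S(Tq − Th)) = T · J_EZ(q, S(q − h))`. -/
theorem JEZ_translation_equivariant (N : ℕ) (hN : 3 ≤ N) (a b : ℤ)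
    (S : Matrix (Fin N × Fin N) (Fin N × Fin N) ℝ)
    (hST : S * transT N a b = transT N a b * S)
    (q h : Fin N × Fin N → ℝ) :
    JEZ N ((transT N a b).mulVec q)
        (S.mulVec ((transT N a b).mulVec q - (transT N a b).mulVec h))
      = (transT N a b).mulVec (JEZ N q (S.mulVec (q - h))) := by
  haveI : NeZero N := ⟨by omega⟩
  open JEZAux in
  have hT : ∀ f, (transT N a b).mulVec f = tr N a b f := transT_mulVec a b
  have hS : ∀ f, S.mulVec (tr N a b f) = tr N a b (S.mulVec f) := by
    intro f
    rw [← hT, Matrix.mulVec_mulVec, hST, ← Matrix.mulVec_mulVec, hT]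
  rw [hT, hT, hT, ← tr_sub, hS, JEZ_tr]
end
end

section
/- For all u, v ∈ ℝ^{N²}, the components of J_0(u, v) sum to zero: Σ_i ((D_x u)∗(D_y v) − (D_y u)∗(D_x v))_i = 0. In particular the semi-discretization J_0 preserves the discrete total circulation. -/
open Matrix
open scoped Kronecker

noncomputable section

lemma Dmat_transpose (N : ℕ) : (Dmat N)ᵀ = -(Dmat N) := by
  simp [Dmat, transpose_smul, transpose_sub]
  rw [← smul_neg, neg_sub]

lemma key_comm (N : ℕ) : (Dx N)ᵀ * Dy N = (Dy N)ᵀ * Dx N := by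
  have h1 : (Dx N)ᵀ = (1 : Matrix (Fin N) (Fin N) ℝ) ⊗ₖ (Dmat N)ᵀ := by
    rw [Dx, ← Matrix.kroneckerMap_transpose, Matrix.transpose_one]
  have h2 : (Dy N)ᵀ = (Dmat N)ᵀ ⊗ₖ (1 : Matrix (Fin N) (Fin N) ℝ) := by
    rw [Dy, ← Matrix.kroneckerMap_transpose, Matrix.transpose_one]
  rw [h1, h2, Dx, Dy, ← Matrix.mul_kronecker_mul, ← Matrix.mul_kronecker_mul,
    Matrix.one_mul, Matrix.mul_one, Dmat_transpose]
  ext ⟨i,i'⟩ ⟨j,j'⟩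
  simp only [Matrix.kroneckerMap_apply, Matrix.neg_apply]
  ring

/-- the components of `J_0(u,v) = (D_x u)∗(D_y v) − (D_y u)∗(D_x v)`
sum to zero, so the `J_0` semi-discretization preserves the discrete total
circulation `C(q) = δ² Σ_i q_i`. -/
theorem J0_sum_components_eq_zero (N : ℕ) (hN : 3 ≤ N)
    (u v : Fin N × Fin N → ℝ) :
    ∑ i : Fin N × Fin N,
      ((Dx N).mulVec u * (Dy N).mulVec v - (Dy N).mulVec u * (Dx N).mulVec v) i
      = 0 := by
  have h : ∀ (A B : Matrix (Fin N × Fin N) (Fin N × Fin N) ℝ),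
      ∑ i, (A.mulVec u * B.mulVec v) i = (u ᵥ* (Aᵀ * B)) ⬝ᵥ v := by
    intro A B
    calc ∑ i, (A.mulVec u * B.mulVec v) i = (A *ᵥ u) ⬝ᵥ (B *ᵥ v) := by
          simp [dotProduct]
      _ = ((A *ᵥ u) ᵥ* B) ⬝ᵥ v := Matrix.dotProduct_mulVec _ _ _
      _ = (u ᵥ* (Aᵀ * B)) ⬝ᵥ v := by rw [Matrix.vecMul_mulVec]
  simp only [Pi.sub_apply, Finset.sum_sub_distrib, h, key_comm]
  ring
end
end

section
/- The system of equations 2α + β = 1 and 2α³ + β³ = 0 has a unique real solution (α, β), given by α = 1/(2 − 2^{1/3}) and β = −2^{1/3}/(2 − 2^{1/3}). -/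
/-- Yoshida's order conditions `2α + β = 1`, `2α³ + β³ = 0` have
the unique real solution `α = 1/(2 − 2^{1/3})`, `β = −2^{1/3}/(2 − 2^{1/3})`. -/
theorem yoshida_coefficients_unique :
    ∀ α β : ℝ,
      (2 * α + β = 1 ∧ 2 * α ^ 3 + β ^ 3 = 0) ↔
        (α = 1 / (2 - (2 : ℝ) ^ ((1 : ℝ) / 3)) ∧
          β = -(2 : ℝ) ^ ((1 : ℝ) / 3) / (2 - (2 : ℝ) ^ ((1 : ℝ) / 3))) := by
  intro α β
  set c : ℝ := (2 : ℝ) ^ ((1 : ℝ) / 3) with hc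
  have hc3 : c ^ 3 = 2 := by
    rw [hc, ← Real.rpow_natCast ((2:ℝ) ^ ((1:ℝ)/3)) 3, ← Real.rpow_mul (by norm_num)]
    norm_num
  have hcpos : 0 < c := Real.rpow_pos_of_pos (by norm_num) _
  have hclt : c < 2 := by
    nlinarith [hc3, sq_nonneg (c - 2), sq_nonneg c]
  have h2c : 2 - c ≠ 0 := by linarith
  constructor
  · rintro ⟨h1, h2⟩
    have hcube : β ^ 3 = (-(c * α)) ^ 3 := by
      have : (-(c * α)) ^ 3 = -(c ^ 3 * α ^ 3) := by ring
      rw [this, hc3]; linarith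
    have hβ : β = -(c * α) := by
      have h3 : Odd 3 := ⟨1, by norm_num⟩
      exact (Odd.strictMono_pow (R := ℝ) h3).injective hcube
    have hα : α * (2 - c) = 1 := by rw [hβ] at h1; linarith
    have hαval : α = 1 / (2 - c) := by
      field_simp
      linarith
    constructor
    · exact hαval
    · rw [hβ, hαval]; field_simp
  · rintro ⟨hα, hβ⟩
    subst hα hβ
    constructor
    · field_simp; ring
    · field_simp
      nlinarith [hc3]
end
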